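/- For every T ≥ 0, every positive integer N, and every n×n complex matrix ρ, the N-fold composition of the qDRIFT map with step t = T/N satisfies ‖𝓔_{T/N}^N(ρ) − exp(−iHT) ρ exp(iHT)‖ ≤ (4(λT)²/N) · e^{2λT/N} · ‖ρ‖. -/

import Mathlib

open scoped Matrix.Norms.L2Operator

/-- The qDRIFT map `𝓔_t(B) = ∑ⱼ pⱼ exp(−iλt Hⱼ) B exp(iλt Hⱼ)` with `pⱼ = hⱼ/λ`,
`λ = ∑ⱼ hⱼ`. -/
noncomputable def qDrift {n L : ℕ} (H : Fin L → Matrix (Fin n) (Fin n) ℂ)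
    (h : Fin L → ℝ) (t : ℝ) (B : Matrix (Fin n) (Fin n) ℂ) : Matrix (Fin n) (Fin n) ℂ :=
  ∑ j, (((h j / ∑ k, h k : ℝ)) : ℂ) •
    (NormedSpace.exp ((-Complex.I * ((∑ k, h k : ℝ) : ℂ) * (t : ℂ)) • H j) * B *
      NormedSpace.exp ((Complex.I * ((∑ k, h k : ℝ) : ℂ) * (t : ℂ)) • H j))

/-!
Write `Xⱼ = -iλt Hⱼ`, so that one qDRIFT step is the average `∑ⱼ pⱼ e^{Xⱼ} B e^{-Xⱼ}` of
unitary conjugations. To second order, `e^{X} B e^{-X} = B + ⁅X, B⁆ + O(‖X‖² ‖B‖)`, and the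
first-order terms average exactly to `B + ⁅Y, B⁆` with `Y = ∑ⱼ pⱼ Xⱼ = -itH`, the first-order
term of conjugation by `e^{-itH}`. Hence one step deviates from the exact evolution by at most
`4(λt)² e^{2λt} ‖B‖`. Both maps are contractions, so over `N` steps the errors only add up,
which gives `N · 4(λT/N)² e^{2λT/N} ‖ρ‖`.
-/

open NormedSpace
open scoped Nat

theorem norm_exp_sub_one_sub_le {A : Type*} [NormedRing A] [NormedAlgebra ℝ A] [CompleteSpace A]
    (x : A) : ‖exp x - 1 - x‖ ≤ ‖x‖ ^ 2 / 2 * Real.exp ‖x‖ := by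
  have htail : exp x - 1 - x = ∑' k : ℕ, ((k + 2)! : ℝ)⁻¹ • x ^ (k + 2) := by
    rw [congrFun (exp_eq_tsum ℝ) x, ← (expSeries_summable' (𝕂 := ℝ) x).sum_add_tsum_nat_add 2]
    simp [Finset.sum_range_succ]
    abel
  have hterm (k : ℕ) : ‖((k + 2)! : ℝ)⁻¹ • x ^ (k + 2)‖ ≤ ‖x‖ ^ 2 / 2 * (‖x‖ ^ k / k !) := by
    have hfac : (2 * k ! : ℝ) ≤ (k + 2)! := by
      exact_mod_cast Nat.le_of_dvd (Nat.factorial_pos _)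
        (by simpa [add_comm] using Nat.factorial_mul_factorial_dvd_factorial_add 2 k)
    calc ‖((k + 2)! : ℝ)⁻¹ • x ^ (k + 2)‖ ≤ ((k + 2)! : ℝ)⁻¹ * ‖x‖ ^ (k + 2) := by
          rw [norm_smul, norm_inv, RCLike.norm_natCast]
          gcongr
          exact norm_pow_le' x (by omega)
      _ ≤ (2 * k ! : ℝ)⁻¹ * ‖x‖ ^ (k + 2) := by gcongr
      _ = ‖x‖ ^ 2 / 2 * (‖x‖ ^ k / k !) := by ring
  have hsum : HasSum (fun k : ℕ => ‖x‖ ^ 2 / 2 * (‖x‖ ^ k / k !))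
      (‖x‖ ^ 2 / 2 * Real.exp ‖x‖) := by
    rw [Real.exp_eq_exp_ℝ, exp_eq_tsum_div]
    exact (Real.summable_pow_div_factorial ‖x‖).hasSum.mul_left _
  exact htail ▸ tsum_of_norm_bounded hsum hterm

theorem norm_iterate_sub_iterate_le {E : Type*} [SeminormedAddCommGroup E] {f g : E → E}
    {ε : ℝ} (hε : 0 ≤ ε) (hf : ∀ x, ‖f x‖ ≤ ‖x‖) (hg : LipschitzWith 1 g)
    (hfg : ∀ x, ‖f x - g x‖ ≤ ε * ‖x‖) (N : ℕ) (x : E) :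
    ‖f^[N] x - g^[N] x‖ ≤ N * ε * ‖x‖ := by
  have hfN (k : ℕ) : ‖f^[k] x‖ ≤ ‖x‖ := by
    induction k with
    | zero => rfl
    | succ k ih => rw [Function.iterate_succ_apply']; exact (hf _).trans ih
  induction N with
  | zero => simp
  | succ k ih =>
    rw [Function.iterate_succ_apply', Function.iterate_succ_apply']
    calc ‖f (f^[k] x) - g (g^[k] x)‖
        ≤ ‖f (f^[k] x) - g (f^[k] x)‖ + ‖g (f^[k] x) - g (g^[k] x)‖ :=
          norm_sub_le_norm_sub_add_norm_sub _ _ _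
      _ ≤ ε * ‖x‖ + k * ε * ‖x‖ := by
          gcongr
          · exact (hfg _).trans (by gcongr; exact hfN k)
          · exact ih.trans' (by simpa [dist_eq_norm] using hg.dist_le_mul (f^[k] x) (g^[k] x))
      _ = (k + 1 : ℕ) * ε * ‖x‖ := by push_cast; ring

theorem iterate_mul_mul_apply {M : Type*} [Monoid M] (a b x : M) (N : ℕ) :
    (fun y => a * y * b)^[N] x = a ^ N * x * b ^ N := by
  induction N with
  | zero => simp
  | succ k ih => rw [Function.iterate_succ_apply', ih, pow_succ', pow_succ]; simp only [mul_assoc]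

section CStarAlgebra

variable {A : Type*} [CStarAlgebra A]

theorem exp_mem_unitary_of_mem_skewAdjoint' {X : A} (hX : X ∈ skewAdjoint A) :
    exp X ∈ unitary A :=
  let +nondep : NormedAlgebra ℚ A := .restrictScalars ℚ ℂ A
  exp_mem_unitary_of_mem_skewAdjoint hX

theorem norm_exp_mul_mul_exp_neg {X : A} (hX : X ∈ skewAdjoint A) (B : A) :
    ‖exp X * B * exp (-X)‖ = ‖B‖ := by
  rw [CStarRing.norm_mul_mem_unitary _ (exp_mem_unitary_of_mem_skewAdjoint' (neg_mem hX)),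
    CStarRing.norm_mem_unitary_mul _ (exp_mem_unitary_of_mem_skewAdjoint' hX)]

theorem isometry_exp_mul_mul_exp_neg {X : A} (hX : X ∈ skewAdjoint A) :
    Isometry fun B => exp X * B * exp (-X) :=
  Isometry.of_dist_eq fun x y => by
    rw [dist_eq_norm, dist_eq_norm, ← sub_mul, ← mul_sub, norm_exp_mul_mul_exp_neg hX]

theorem norm_exp_mul_mul_exp_neg_sub_le {X : A} (hX : X ∈ skewAdjoint A) {a : ℝ}
    (ha : ‖X‖ ≤ a) (B : A) :
    ‖exp X * B * exp (-X) - (B + ⁅X, B⁆)‖ ≤ 2 * a ^ 2 * Real.exp (2 * a) * ‖B‖ := by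
  have ha0 : 0 ≤ a := (norm_nonneg X).trans ha
  obtain ⟨S, hS, e1⟩ : ∃ S : A, ‖S‖ ≤ a ^ 2 / 2 * Real.exp a ∧ exp X = 1 + X + S :=
    ⟨_, (norm_exp_sub_one_sub_le X).trans (by gcongr), by abel⟩
  obtain ⟨S', hS', e2⟩ : ∃ S' : A, ‖S'‖ ≤ a ^ 2 / 2 * Real.exp a ∧ exp (-X) = 1 - X + S' :=
    ⟨_, (norm_exp_sub_one_sub_le (-X)).trans (by rw [norm_neg]; gcongr), by abel⟩
  set c := a ^ 2 / 2 * Real.exp a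
  have hdecomp : exp X * B * exp (-X) - (B + ⁅X, B⁆) =
      S * B * exp (-X) + B * S' + X * B * S' - X * B * X := by
    rw [e1, e2, Ring.lie_def]
    noncomm_ring
  have hunit : exp (-X) ∈ unitary A := exp_mem_unitary_of_mem_skewAdjoint' (neg_mem hX)
  have h1a : 1 + a ≤ Real.exp a := by linarith [Real.add_one_le_exp a]
  rw [hdecomp]
  calc ‖S * B * exp (-X) + B * S' + X * B * S' - X * B * X‖
      ≤ ‖S * B * exp (-X)‖ + ‖B * S'‖ + ‖X * B * S'‖ + ‖X * B * X‖ :=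
        norm_sub_le_of_le norm_add₃_le le_rfl
    _ ≤ ‖S‖ * ‖B‖ + ‖B‖ * ‖S'‖ + ‖X‖ * ‖B‖ * ‖S'‖ + ‖X‖ * ‖B‖ * ‖X‖ := by
        rw [CStarRing.norm_mul_mem_unitary _ hunit]
        gcongr <;> first | exact norm_mul_le _ _ | exact norm_mul₃_le
    _ ≤ c * ‖B‖ + ‖B‖ * c + a * ‖B‖ * c + a * ‖B‖ * a := by gcongr
    _ = (c * (2 + a) + a ^ 2) * ‖B‖ := by ring
    _ ≤ 2 * a ^ 2 * Real.exp (2 * a) * ‖B‖ := by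
        gcongr
        have h2a : Real.exp (2 * a) = Real.exp a * Real.exp a := by rw [← Real.exp_add, two_mul]
        have h1 : 1 ≤ Real.exp a := Real.one_le_exp ha0
        simp only [c, h2a]
        nlinarith [mul_le_mul_of_nonneg_left h1a (sq_nonneg a),
          mul_nonneg (sq_nonneg a) (Real.exp_pos a).le]

variable {ι : Type*} [Fintype ι]

noncomputable def expConjAverage (p : ι → ℝ) (X : ι → A) (B : A) : A :=
  ∑ j, p j • (exp (X j) * B * exp (-X j))

variable {p : ι → ℝ} {X : ι → A}

theorem norm_expConjAverage_le (hp : ∀ j, 0 ≤ p j) (hp1 : ∑ j, p j = 1)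
    (hX : ∀ j, X j ∈ skewAdjoint A) (B : A) : ‖expConjAverage p X B‖ ≤ ‖B‖ :=
  calc ‖expConjAverage p X B‖ ≤ ∑ j, p j * ‖B‖ := by
        refine (norm_sum_le _ _).trans (Finset.sum_le_sum fun j _ => ?_)
        rw [norm_smul, Real.norm_of_nonneg (hp j), norm_exp_mul_mul_exp_neg (hX j)]
    _ = ‖B‖ := by rw [← Finset.sum_mul, hp1, one_mul]

theorem sum_smul_mem_skewAdjoint (hX : ∀ j, X j ∈ skewAdjoint A) :
    ∑ j, p j • X j ∈ skewAdjoint A :=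
  AddSubgroup.sum_mem _ fun j _ => skewAdjoint.smul_mem (p j) (hX j)

theorem norm_expConjAverage_sub_le (hp : ∀ j, 0 ≤ p j) (hp1 : ∑ j, p j = 1)
    (hX : ∀ j, X j ∈ skewAdjoint A) {a : ℝ} (ha : ∀ j, ‖X j‖ ≤ a) (B : A) :
    ‖expConjAverage p X B - exp (∑ j, p j • X j) * B * exp (-∑ j, p j • X j)‖ ≤
      4 * a ^ 2 * Real.exp (2 * a) * ‖B‖ := by
  set Y := ∑ j, p j • X j
  have hYa : ‖Y‖ ≤ a := calc
    ‖Y‖ ≤ ∑ j, p j * a := (norm_sum_le _ _).trans <| Finset.sum_le_sum fun j _ => by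
        rw [norm_smul, Real.norm_of_nonneg (hp j)]; exact mul_le_mul_of_nonneg_left (ha j) (hp j)
    _ = a := by rw [← Finset.sum_mul, hp1, one_mul]
  set R : A → A := fun Z => exp Z * B * exp (-Z) - (B + ⁅Z, B⁆)
  set C := 2 * a ^ 2 * Real.exp (2 * a) * ‖B‖
  have hfirst : ∑ j, p j • (B + ⁅X j, B⁆) = B + ⁅Y, B⁆ := by
    simp only [Y, Ring.lie_def, Finset.sum_mul, Finset.mul_sum, smul_add, smul_sub,
      Finset.sum_add_distrib, Finset.sum_sub_distrib, ← Finset.sum_smul, hp1, one_smul,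
      smul_mul_assoc, mul_smul_comm]
  have hsplit : expConjAverage p X B - exp Y * B * exp (-Y) = ∑ j, p j • R (X j) - R Y := by
    simp only [expConjAverage, R, smul_sub, Finset.sum_sub_distrib, hfirst]
    abel
  rw [hsplit]
  calc ‖∑ j, p j • R (X j) - R Y‖ ≤ ∑ j, p j * C + C := by
        refine norm_sub_le_of_le ((norm_sum_le _ _).trans (Finset.sum_le_sum fun j _ => ?_))
          (norm_exp_mul_mul_exp_neg_sub_le (sum_smul_mem_skewAdjoint hX) hYa B)
        rw [norm_smul, Real.norm_of_nonneg (hp j)]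
        exact mul_le_mul_of_nonneg_left (norm_exp_mul_mul_exp_neg_sub_le (hX j) (ha j) B) (hp j)
    _ = 4 * a ^ 2 * Real.exp (2 * a) * ‖B‖ := by rw [← Finset.sum_mul, hp1]; ring

end CStarAlgebra

theorem Matrix.exp_div_smul_pow {m : Type*} [Fintype m] [DecidableEq m] (x : Matrix m m ℂ)
    (c : ℂ) {N : ℕ} (hN : N ≠ 0) : exp ((c / N) • x) ^ N = exp (c • x) := by
  rw [← Matrix.exp_nsmul, ← Nat.cast_smul_eq_nsmul ℂ, smul_smul,
    mul_div_cancel₀ _ (Nat.cast_ne_zero.2 hN)]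

section qDrift

variable {n L : ℕ} {H : Fin L → Matrix (Fin n) (Fin n) ℂ} {h : Fin L → ℝ}

noncomputable def qDriftGenerator (H : Fin L → Matrix (Fin n) (Fin n) ℂ) (h : Fin L → ℝ) (t : ℝ)
    (j : Fin L) : Matrix (Fin n) (Fin n) ℂ :=
  (-Complex.I * ((∑ k, h k : ℝ) : ℂ) * t) • H j

theorem qDrift_eq_expConjAverage (t : ℝ) :
    qDrift H h t = expConjAverage (fun j => h j / ∑ k, h k) (qDriftGenerator H h t) := by
  funext B
  refine Finset.sum_congr rfl fun j _ => ?_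
  rw [qDriftGenerator, Complex.coe_smul, ← neg_smul, neg_mul, neg_mul, neg_neg]

theorem qDriftGenerator_mem_skewAdjoint (hHerm : ∀ j, (H j).IsHermitian) (t : ℝ) (j : Fin L) :
    qDriftGenerator H h t j ∈ skewAdjoint _ :=
  (hHerm j).isSelfAdjoint.smul_mem_skewAdjoint (by simp [skewAdjoint.mem_iff])

theorem norm_qDriftGenerator_le (hHnorm : ∀ j, ‖H j‖ ≤ 1) (hh : ∀ j, 0 ≤ h j) {t : ℝ}
    (ht : 0 ≤ t) (j : Fin L) : ‖qDriftGenerator H h t j‖ ≤ (∑ k, h k) * t := by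
  have hlam : 0 ≤ ∑ k, h k := Finset.sum_nonneg fun k _ => hh k
  have hc : ‖-Complex.I * ((∑ k, h k : ℝ) : ℂ) * t‖ = (∑ k, h k) * t := by
    rw [norm_mul, norm_mul, norm_neg, Complex.norm_I, one_mul, Complex.norm_real,
      Complex.norm_real, Real.norm_of_nonneg hlam, Real.norm_of_nonneg ht]
  rw [qDriftGenerator, norm_smul, hc]
  exact mul_le_of_le_one_right (by positivity) (hHnorm j)

theorem sum_smul_qDriftGenerator (hlam : ∑ k, h k ≠ 0) (t : ℝ) :
    ∑ j, (h j / ∑ k, h k) • qDriftGenerator H h t j =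
      (-Complex.I * t) • ∑ j, ((h j : ℝ) : ℂ) • H j := by
  simp only [qDriftGenerator, Finset.smul_sum, ← Complex.coe_smul, smul_smul]
  refine Finset.sum_congr rfl fun j _ => ?_
  have hlamC : ((∑ k, h k : ℝ) : ℂ) ≠ 0 := Complex.ofReal_ne_zero.2 hlam
  congr 1
  push_cast at hlamC ⊢
  field_simp

theorem norm_qDrift_apply_le (hHerm : ∀ j, (H j).IsHermitian) (hh : ∀ j, 0 ≤ h j)
    (hlam : ∑ k, h k ≠ 0) (t : ℝ) (B : Matrix (Fin n) (Fin n) ℂ) : ‖qDrift H h t B‖ ≤ ‖B‖ := by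
  rw [qDrift_eq_expConjAverage]
  exact norm_expConjAverage_le (fun j => div_nonneg (hh j) (Finset.sum_nonneg fun k _ => hh k))
    (by rw [← Finset.sum_div, div_self hlam]) (qDriftGenerator_mem_skewAdjoint hHerm t) B

theorem norm_qDrift_apply_sub_le (hHerm : ∀ j, (H j).IsHermitian) (hHnorm : ∀ j, ‖H j‖ ≤ 1)
    (hh : ∀ j, 0 ≤ h j) (hlam : ∑ k, h k ≠ 0) {t : ℝ} (ht : 0 ≤ t)
    (B : Matrix (Fin n) (Fin n) ℂ) :
    ‖qDrift H h t B - exp ((-Complex.I * t) • ∑ j, ((h j : ℝ) : ℂ) • H j) * B *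
        exp (-((-Complex.I * t) • ∑ j, ((h j : ℝ) : ℂ) • H j))‖ ≤
      4 * ((∑ k, h k) * t) ^ 2 * Real.exp (2 * ((∑ k, h k) * t)) * ‖B‖ := by
  rw [qDrift_eq_expConjAverage, ← sum_smul_qDriftGenerator hlam]
  exact norm_expConjAverage_sub_le (fun j => div_nonneg (hh j) (Finset.sum_nonneg fun k _ => hh k))
    (by rw [← Finset.sum_div, div_self hlam]) (qDriftGenerator_mem_skewAdjoint hHerm t)
    (norm_qDriftGenerator_le hHnorm hh ht) B

end qDrift

theorem qDrift_iterate_error_bound_general {n L : ℕ} (hL : 1 ≤ L)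
    (H : Fin L → Matrix (Fin n) (Fin n) ℂ)
    (hHerm : ∀ j, (H j).IsHermitian) (hHnorm : ∀ j, ‖H j‖ ≤ 1)
    (h : Fin L → ℝ) (hh : ∀ j, 0 < h j)
    (T : ℝ) (hT : 0 ≤ T) (N : ℕ) (hN : 0 < N) (ρ : Matrix (Fin n) (Fin n) ℂ) :
    ‖(qDrift H h (T / N))^[N] ρ -
        NormedSpace.exp ((-Complex.I * (T : ℂ)) • ∑ j, ((h j : ℝ) : ℂ) • H j) * ρ *
          NormedSpace.exp ((Complex.I * (T : ℂ)) • ∑ j, ((h j : ℝ) : ℂ) • H j)‖ ≤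
      4 * ((∑ j, h j) * T) ^ 2 / N * Real.exp (2 * (∑ j, h j) * T / N) * ‖ρ‖ := by
  have hlam : 0 < ∑ j, h j := Finset.sum_pos (fun j _ => hh j) ⟨⟨0, hL⟩, Finset.mem_univ _⟩
  have hh' : ∀ j, 0 ≤ h j := fun j => (hh j).le
  have hY : (-Complex.I * ((T / N : ℝ) : ℂ)) • ∑ j, ((h j : ℝ) : ℂ) • H j ∈ skewAdjoint _ := by
    rw [← sum_smul_qDriftGenerator hlam.ne']
    exact sum_smul_mem_skewAdjoint (qDriftGenerator_mem_skewAdjoint hHerm _)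
  set M := ∑ j, ((h j : ℝ) : ℂ) • H j
  set Y := (-Complex.I * ((T / N : ℝ) : ℂ)) • M
  have hpow (c : ℂ) : exp ((c * ((T / N : ℝ) : ℂ)) • M) ^ N = exp ((c * T) • M) := by
    rw [← Matrix.exp_div_smul_pow M (c * T) hN.ne']
    push_cast
    ring_nf
  calc _ = ‖(qDrift H h (T / N))^[N] ρ - (fun B => exp Y * B * exp (-Y))^[N] ρ‖ := by
        rw [iterate_mul_mul_apply, hpow, ← neg_smul, ← neg_mul, hpow, neg_neg]
    _ ≤ N * (4 * ((∑ j, h j) * (T / N)) ^ 2 * Real.exp (2 * ((∑ j, h j) * (T / N)))) * ‖ρ‖ :=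
        norm_iterate_sub_iterate_le (by positivity) (norm_qDrift_apply_le hHerm hh' hlam.ne' _)
          (isometry_exp_mul_mul_exp_neg hY).lipschitz
          (norm_qDrift_apply_sub_le hHerm hHnorm hh' hlam.ne' (by positivity)) N ρ
    _ = _ := by field_simp

/-- `N`-fold composition of the qDRIFT map with step `t = T/N` satisfies
`‖𝓔_{T/N}^N(ρ) − exp(−iHT) ρ exp(iHT)‖ ≤ (4(λT)²/N)·e^{2λT/N}·‖ρ‖`. -/
theorem qDrift_iterate_error_bound {n L : ℕ} (hn : 1 ≤ n) (hL : 1 ≤ L)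
    (H : Fin L → Matrix (Fin n) (Fin n) ℂ)
    (hHerm : ∀ j, (H j).IsHermitian) (hHnorm : ∀ j, ‖H j‖ ≤ 1)
    (h : Fin L → ℝ) (hh : ∀ j, 0 < h j)
    (T : ℝ) (hT : 0 ≤ T) (N : ℕ) (hN : 0 < N) (ρ : Matrix (Fin n) (Fin n) ℂ) :
    ‖(qDrift H h (T / N))^[N] ρ -
        NormedSpace.exp ((-Complex.I * (T : ℂ)) • ∑ j, ((h j : ℝ) : ℂ) • H j) * ρ *
          NormedSpace.exp ((Complex.I * (T : ℂ)) • ∑ j, ((h j : ℝ) : ℂ) • H j)‖ ≤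
      4 * ((∑ j, h j) * T) ^ 2 / N * Real.exp (2 * (∑ j, h j) * T / N) * ‖ρ‖ :=
  qDrift_iterate_error_bound_general hL H hHerm hHnorm h hh T hT N hN ρ
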